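/- arXiv:2501.00650 — 5 statements merged into one kernel-verified Lean document; each statement's English description precedes it below -/
import Mathlib

section
/- Let G be a finite group with center Z, and let ρ: G → GL(V) be a finite-dimensional complex representation of dimension s with character χ. If χ(g) = 0 for all g ∉ Z and |G/Z| = s², then ρ is irreducible. -/
/-!
The dimension of `End_G(V)` is the character inner product `|G|⁻¹ ∑ χ(g) χ(g⁻¹)`. Each `ρ g` has
finite order, so its eigenvalues are roots of unity and `|χ(g)| ≤ s`; as `χ` vanishes off `Z`, the
inner product is at most `|Z| s² / |G| = 1`. Hence every `G`-endomorphism of `V` is a scalar.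
Averaging a projection onto a `G`-stable subspace `U` over `G` (Maschke) gives an equivariant
projection onto `U`, which is therefore `0` or the identity.
-/

open Module LinearMap

theorem Module.End.norm_trace_le_finrank_of_isOfFinOrder {V : Type*} [AddCommGroup V]
    [Module ℂ V] [FiniteDimensional ℂ V] {f : End ℂ V} (hf : IsOfFinOrder f) :
    ‖trace ℂ V f‖ ≤ finrank ℂ V := by
  have hroot : ∀ μ ∈ f.charpoly.roots, ‖μ‖ = 1 := by
    intro μ hμ
    have hμ : f.HasEigenvalue μ := (hasEigenvalue_iff_isRoot_charpoly f μ).2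
      ((Polynomial.mem_roots f.charpoly_monic.ne_zero).1 hμ)
    obtain ⟨v, hv⟩ := hμ.exists_hasEigenvector
    have hpow : μ ^ orderOf f • v = v := by
      rw [← hv.pow_apply, pow_orderOf_eq_one, Module.End.one_apply]
    have : μ ^ orderOf f = 1 := smul_left_injective ℂ hv.2 (by simpa using hpow)
    exact Complex.norm_eq_one_of_pow_eq_one this hf.orderOf_pos.ne'
  rw [trace_eq_sum_roots_charpoly_of_splits (IsAlgClosed.splits _)]
  calc ‖f.charpoly.roots.sum‖ ≤ (f.charpoly.roots.map (‖·‖)).sum := norm_multiset_sum_le _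
    _ = f.charpoly.roots.card := by
      rw [Multiset.map_congr rfl hroot, Multiset.map_const', Multiset.sum_replicate, nsmul_one]
    _ = finrank ℂ V := by
      rw [← (IsAlgClosed.splits f.charpoly).natDegree_eq_card_roots, charpoly_natDegree]

namespace Representation

variable {k G V : Type*} [Field k] [Group G] [AddCommGroup V] [Module k V]

theorem averageMap_apply {W : Type*} [AddCommGroup W] [Module k W] [Fintype G]
    [Invertible (Fintype.card G : k)] (σ : Representation k G W) (w : W) :
    σ.averageMap w = ⅟(Fintype.card G : k) • ∑ g : G, σ g w := by
  simp [averageMap, GroupAlgebra.average, map_sum]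

theorem exists_isProj_mem_invariants_linHom [Fintype G] [Invertible (Fintype.card G : k)]
    (ρ : Representation k G V) (U : Submodule k V) (hU : ∀ g : G, ∀ v ∈ U, ρ g v ∈ U) :
    ∃ P ∈ (linHom ρ ρ).invariants, IsProj U P := by
  obtain ⟨U', hUU'⟩ := U.exists_isCompl
  set π := U.projection U' hUU'
  refine ⟨(linHom ρ ρ).averageMap π, averageMap_invariant _ _, fun v => ?_, fun u hu => ?_⟩
  · rw [averageMap_apply, LinearMap.smul_apply, LinearMap.sum_apply]
    simp only [linHom_apply, comp_apply]
    exact U.smul_mem _ <| U.sum_mem fun g _ => hU g _ (U.projection_apply_mem hUU' _)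
  · have hconj : ∀ g : G, linHom ρ ρ g π u = u := fun g => by
      rw [linHom_apply, comp_apply, comp_apply, U.projection_apply_of_mem_left hUU' (hU _ _ hu),
        ← Module.End.mul_apply, ← map_mul, mul_inv_cancel, map_one, Module.End.one_apply]
    rw [averageMap_apply, LinearMap.smul_apply, LinearMap.sum_apply]
    simp only [hconj, Finset.sum_const, Finset.card_univ]
    rw [← Nat.cast_smul_eq_nsmul k, smul_smul, invOf_mul_self, one_smul]

theorem exists_eq_smul_one_of_finrank_invariants_linHom_le_one [FiniteDimensional k V]
    [Nontrivial V] {ρ : Representation k G V} (h : finrank k (linHom ρ ρ).invariants ≤ 1)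
    {P : V →ₗ[k] V} (hP : P ∈ (linHom ρ ρ).invariants) : ∃ c : k, P = c • 1 := by
  have hone : (1 : V →ₗ[k] V) ∈ (linHom ρ ρ).invariants := fun g => by
    rw [linHom_apply]
    ext v
    simp [← Module.End.mul_apply, ← map_mul]
  have hne : (⟨1, hone⟩ : (linHom ρ ρ).invariants) ≠ 0 :=
    fun h0 => one_ne_zero (congrArg Subtype.val h0)
  have hrank : finrank k (linHom ρ ρ).invariants = 1 :=
    le_antisymm h (finrank_pos_iff_exists_ne_zero.2 ⟨_, hne⟩)
  obtain ⟨c, hc⟩ := (finrank_eq_one_iff_of_nonzero' _ hne).1 hrank ⟨P, hP⟩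
  exact ⟨c, (congrArg Subtype.val hc).symm⟩

theorem eq_bot_or_eq_top_of_finrank_intertwiningMap_le_one [Fintype G]
    [Invertible (Fintype.card G : k)] [FiniteDimensional k V] {ρ : Representation k G V}
    (h : finrank k (IntertwiningMap ρ ρ) ≤ 1) (U : Submodule k V)
    (hU : ∀ g : G, ∀ v ∈ U, ρ g v ∈ U) : U = ⊥ ∨ U = ⊤ := by
  rw [or_iff_not_imp_left]
  intro hUbot
  obtain ⟨u, hu, hu0⟩ := U.exists_mem_ne_zero_of_ne_bot hUbot
  have : Nontrivial V := ⟨⟨u, 0, hu0⟩⟩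
  obtain ⟨P, hP, hPU⟩ := exists_isProj_mem_invariants_linHom ρ U hU
  obtain ⟨c, rfl⟩ := exists_eq_smul_one_of_finrank_invariants_linHom_le_one
    ((invariantsEquivIntertwiningMap ρ ρ).finrank_eq ▸ h) hP
  have hc : c = 1 := smul_left_injective k hu0 (by simpa using hPU.map_id u hu)
  rw [hPU.submodule_eq_top_iff, hc, one_smul]
  rfl

variable [Module ℂ V] [FiniteDimensional ℂ V]

theorem norm_character_le_finrank [Finite G] (ρ : Representation ℂ G V) (g : G) :
    ‖ρ.character g‖ ≤ finrank ℂ V :=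
  End.norm_trace_le_finrank_of_isOfFinOrder (ρ.isOfFinOrder (isOfFinOrder_of_finite g))

theorem finrank_intertwiningMap_le_one_of_character_eq_zero [Fintype G]
    {ρ : Representation ℂ G V} {H : Subgroup G} (hχ : ∀ g ∉ H, ρ.character g = 0)
    (hH : finrank ℂ V ^ 2 ≤ H.index) : finrank ℂ (IntertwiningMap ρ ρ) ≤ 1 := by
  classical
  have : Invertible (Nat.card G : ℂ) := invertibleOfNonzero (by simp)
  have hsum : ‖∑ g : G, ρ.character g * ρ.character g⁻¹‖ ≤ Nat.card H * (finrank ℂ V : ℝ) ^ 2 :=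
    calc ‖∑ g : G, ρ.character g * ρ.character g⁻¹‖
        ≤ ∑ g : G, if g ∈ H then (finrank ℂ V : ℝ) ^ 2 else 0 := by
          refine (norm_sum_le _ _).trans (Finset.sum_le_sum fun g _ => ?_)
          split_ifs with hg
          · rw [norm_mul, sq]
            exact mul_le_mul (ρ.norm_character_le_finrank g) (ρ.norm_character_le_finrank g⁻¹)
              (norm_nonneg _) (Nat.cast_nonneg _)
          · simp [hχ g hg]
      _ = Nat.card H * (finrank ℂ V : ℝ) ^ 2 := by
          rw [Finset.sum_ite, Finset.sum_const_zero, add_zero, Finset.sum_const, nsmul_eq_mul,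
            Nat.card_eq_fintype_card, ← Fintype.card_subtype]
  have hG : (Nat.card H : ℝ) * H.index = Nat.card G := by exact_mod_cast H.card_mul_index
  have hGpos : (0 : ℝ) < Nat.card G := by exact_mod_cast Nat.card_pos
  have key := congrArg (‖·‖ : ℂ → ℝ) (card_inv_mul_sum_char_mul_char_eq_finrank ρ ρ)
  rw [norm_mul, norm_inv, Complex.norm_natCast, Complex.norm_natCast] at key
  have : (finrank ℂ (IntertwiningMap ρ ρ) : ℝ) ≤ 1 := by
    rw [← key, inv_mul_le_iff₀ hGpos, mul_one, ← hG]
    exact hsum.trans (mul_le_mul_of_nonneg_left (by exact_mod_cast hH) (Nat.cast_nonneg _))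
  exact_mod_cast this

end Representation

/-- If the character of a finite-dimensional complex representation of a finite group
vanishes off the center and `|G/Z| = (dim V)²`, then the representation is irreducible. -/
theorem stmt_0 {G V : Type*} [Group G] [Fintype G]
    [AddCommGroup V] [Module ℂ V] [FiniteDimensional ℂ V]
    (ρ : Representation ℂ G V)
    (hχ : ∀ g : G, g ∉ Subgroup.center G → LinearMap.trace ℂ V (ρ g) = 0)
    (hcard : Nat.card (G ⧸ Subgroup.center G) = (Module.finrank ℂ V) ^ 2) :
    ∀ U : Submodule ℂ V, (∀ g : G, ∀ v ∈ U, ρ g v ∈ U) → U = ⊥ ∨ U = ⊤ := by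
  have : Invertible (Fintype.card G : ℂ) := invertibleOfNonzero (by simp)
  exact Representation.eq_bot_or_eq_top_of_finrank_intertwiningMap_le_one
    (Representation.finrank_intertwiningMap_le_one_of_character_eq_zero hχ hcard.ge)
end

section
/- Let G be a finite group with center Z, ρ: G → GL(V) irreducible with |G/Z| = s² where s = dim V, and let g₁,…,g_t (t = |G/Z|) be any set of coset representatives of Z in G. Then ρ(g₁),…,ρ(g_t) form a basis of End_ℂ(V). -/
/-!
By Burnside's theorem the operators `ρ g` span `End(V)`. A central element `z` commutes with all
of them, hence with all of `End(V)`, so `ρ z` is a scalar; therefore `ρ (z * g)` is a multiple of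
`ρ g`, and one representative per coset of the centre already spans. A spanning family of
`(dim V)² = dim End(V)` vectors is a basis.
-/

open Module

/-- Burnside's theorem, via the Jacobson density theorem: by Schur the commutant of `A` is `k`,
so every `k`-linear endomorphism lies in the bicommutant, which density identifies with `A`. -/
theorem Subalgebra.eq_top_of_isSimpleModule {k V : Type*} [Field k] [IsAlgClosed k]
    [AddCommGroup V] [Module k V] [FiniteDimensional k V]
    (A : Subalgebra k (End k V)) [IsSimpleModule A V] : A = ⊤ := by
  have schur := IsSimpleModule.algebraMap_end_bijective_of_isAlgClosed k (A := A) (V := V)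
  have : Module.Finite (End A V) V := .of_restrictScalars_finite k _ _
  refine eq_top_iff.mpr fun f _ => ?_
  let F : End (End A V) V :=
    { toFun := f
      map_add' := f.map_add
      map_smul' := fun φ v => by
        obtain ⟨c, rfl⟩ := schur.2 φ
        exact f.map_smul c v }
  obtain ⟨a, ha⟩ := Module.Finite.toModuleEnd_moduleEnd_surjective F
  have : (a : End k V) = f := LinearMap.ext fun v => congr($ha v)
  exact this ▸ a.2

theorem Algebra.adjoin_eq_top_of_invariant_eq_bot_or_top {k V : Type*} [Field k] [IsAlgClosed k]
    [AddCommGroup V] [Module k V] [FiniteDimensional k V] [Nontrivial V] (S : Set (End k V))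
    (hS : ∀ U : Submodule k V, (∀ f ∈ S, ∀ v ∈ U, f v ∈ U) → U = ⊥ ∨ U = ⊤) :
    Algebra.adjoin k S = ⊤ := by
  have : IsSimpleModule (Algebra.adjoin k S) V := by
    refine { eq_bot_or_eq_top := fun U => ?_ }
    have hU := hS (U.restrictScalars k) fun f hf v hv =>
      U.smul_mem ⟨f, Algebra.subset_adjoin hf⟩ hv
    simpa only [Submodule.restrictScalars_eq_bot_iff, Submodule.restrictScalars_eq_top_iff]
      using hU
  exact Subalgebra.eq_top_of_isSimpleModule _

namespace Representation

variable {k V : Type*} [Field k] [IsAlgClosed k]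
  [AddCommGroup V] [Module k V] [FiniteDimensional k V] [Nontrivial V]

section Monoid

variable {G : Type*} [Monoid G] (ρ : Representation k G V)
  (hirr : ∀ U : Submodule k V, (∀ g : G, ∀ v ∈ U, ρ g v ∈ U) → U = ⊥ ∨ U = ⊤)
include hirr

theorem adjoin_range_eq_top : Algebra.adjoin k (Set.range ρ) = ⊤ :=
  Algebra.adjoin_eq_top_of_invariant_eq_bot_or_top _ fun U hU =>
    hirr U fun g => hU (ρ g) ⟨g, rfl⟩

theorem span_range_eq_top : Submodule.span k (Set.range ρ) = ⊤ := by
  rw [← MonoidHom.coe_mrange, ← MonoidHom.mclosure_range, ← Algebra.adjoin_eq_span,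
    adjoin_range_eq_top ρ hirr, Algebra.top_toSubmodule]

theorem exists_eq_algebraMap_of_mem_center {z : G} (hz : z ∈ Submonoid.center G) :
    ∃ c : k, ρ z = algebraMap k (End k V) c := by
  have hcomm : ρ z ∈ Set.centralizer (Set.range ρ) := by
    rintro _ ⟨g, rfl⟩
    rw [← map_mul, ← map_mul, Submonoid.mem_center_iff.mp hz g]
  have hcentral : ρ z ∈ Subalgebra.center k (End k V) :=
    Subalgebra.mem_center_iff.mpr fun f =>
      (Algebra.adjoin_le_centralizer_centralizer k _
        (adjoin_range_eq_top ρ hirr ▸ Algebra.mem_top : f ∈ _) (ρ z) hcomm).symm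
  exact Algebra.IsCentral.mem_center_iff k |>.mp hcentral

end Monoid

section Group

variable {G : Type*} [Group G] (ρ : Representation k G V)
  (hirr : ∀ U : Submodule k V, (∀ g : G, ∀ v ∈ U, ρ g v ∈ U) → U = ⊥ ∨ U = ⊤)
include hirr

theorem span_range_cosetReps_eq_top
    (R : G ⧸ Subgroup.center G → G) (hR : ∀ γ, (R γ : G ⧸ Subgroup.center G) = γ) :
    Submodule.span k (Set.range fun γ => ρ (R γ)) = ⊤ := by
  rw [eq_top_iff, ← span_range_eq_top ρ hirr, Submodule.span_le]
  rintro _ ⟨g, rfl⟩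
  have hz : (R g)⁻¹ * g ∈ Subgroup.center G := QuotientGroup.eq.mp (hR g)
  obtain ⟨c, hc⟩ := exists_eq_algebraMap_of_mem_center ρ hirr hz
  have hg : ρ g = c • ρ (R g) :=
    calc ρ g = ρ (R g) * ρ ((R g)⁻¹ * g) := by rw [← map_mul, mul_inv_cancel_left]
      _ = c • ρ (R g) := by rw [hc, Algebra.algebraMap_eq_smul_one, mul_smul_comm, mul_one]
  rw [SetLike.mem_coe, hg]
  exact Submodule.smul_mem _ _ (Submodule.subset_span ⟨g, rfl⟩)

end Group

end Representation

theorem stmt_3_general {G V : Type*} [Group G]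
    [AddCommGroup V] [Module ℂ V] [FiniteDimensional ℂ V] [Nontrivial V]
    (ρ : Representation ℂ G V)
    (hirr : ∀ U : Submodule ℂ V, (∀ g : G, ∀ v ∈ U, ρ g v ∈ U) → U = ⊥ ∨ U = ⊤)
    (hcard : Nat.card (G ⧸ Subgroup.center G) = (Module.finrank ℂ V) ^ 2)
    (R : G ⧸ Subgroup.center G → G)
    (hR : ∀ γ : G ⧸ Subgroup.center G, (QuotientGroup.mk (R γ) : G ⧸ Subgroup.center G) = γ) :
    LinearIndependent ℂ (fun γ : G ⧸ Subgroup.center G => (ρ (R γ) : V →ₗ[ℂ] V)) ∧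
      Submodule.span ℂ (Set.range fun γ : G ⧸ Subgroup.center G => (ρ (R γ) : V →ₗ[ℂ] V)) = ⊤ := by
  have hspan := ρ.span_range_cosetReps_eq_top hirr R hR
  have : Fintype (G ⧸ Subgroup.center G) :=
    have := Nat.finite_of_card_ne_zero (hcard ▸ pow_ne_zero 2 finrank_pos.ne')
    Fintype.ofFinite _
  have hcard' : Fintype.card (G ⧸ Subgroup.center G) = finrank ℂ (End ℂ V) := by
    rw [← Nat.card_eq_fintype_card, hcard, finrank_linearMap, sq]
  exact ⟨linearIndependent_of_top_le_span_of_card_eq_finrank hspan.ge hcard', hspan⟩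

/-- If `ρ` is irreducible with `|G/Z| = (dim V)²`, then the images under `ρ` of any
set of coset representatives of the center form a basis of `End_ℂ(V)`. -/
theorem stmt_3 {G V : Type*} [Group G] [Fintype G]
    [AddCommGroup V] [Module ℂ V] [FiniteDimensional ℂ V] [Nontrivial V]
    (ρ : Representation ℂ G V)
    (hirr : ∀ U : Submodule ℂ V, (∀ g : G, ∀ v ∈ U, ρ g v ∈ U) → U = ⊥ ∨ U = ⊤)
    (hcard : Nat.card (G ⧸ Subgroup.center G) = (Module.finrank ℂ V) ^ 2)
    (R : G ⧸ Subgroup.center G → G)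
    (hR : ∀ γ : G ⧸ Subgroup.center G, (QuotientGroup.mk (R γ) : G ⧸ Subgroup.center G) = γ) :
    LinearIndependent ℂ (fun γ : G ⧸ Subgroup.center G => (ρ (R γ) : V →ₗ[ℂ] V)) ∧
      Submodule.span ℂ (Set.range fun γ : G ⧸ Subgroup.center G => (ρ (R γ) : V →ₗ[ℂ] V)) = ⊤ :=
  stmt_3_general ρ hirr hcard R hR
end

section
/- Let ρ₁: G₁ → GL(V₁), ρ₂: G₂ → GL(V₂) be SV-representations (irreducible with dim Vᵢ² = |Gᵢ/Z(Gᵢ)|) with central characters ψ₁, ψ₂, and α: G₁ → G₂ an isomorphism. Then an isomorphism T: V₁ → V₂ with T ∘ ρ₁(g) = ρ₂(α(g)) ∘ T for all g ∈ G₁ exists if and only if ψ₁ = ψ₂ ∘ α on Z(G₁). -/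
/-!
If `ρ` is irreducible with central character `ψ` and `dim ρ ^ 2 = [G : Z(G)]`, then
`∑ g, |χ g|² = |G|` by orthonormality, while the central elements alone already contribute
`|Z(G)| (dim ρ)² = |G|`; so `χ` vanishes off the center. Transport `ρ₁` along `α` to a
representation `σ` of `G₂`. If `ψ₁ = ψ₂ ∘ α`, then `σ` and `ρ₂` have the same central character,
so `⟨χ_ρ₂, χ_σ⟩` only sees the center, where it is `dim ρ₁ · dim ρ₂ ≠ 0`; by orthogonality of
irreducible characters, `σ ≅ ρ₂`.
-/

open Module LinearMap Polynomial Representation ComplexConjugate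

theorem LinearMap.trace_eq_sum_of_isInternal {K V ι : Type*} [Field K] [AddCommGroup V]
    [Module K V] [FiniteDimensional K V] [DecidableEq ι] {N : ι → Submodule K V}
    (hN : DirectSum.IsInternal N) (hfin : {i | N i ≠ ⊥}.Finite) {f : Module.End K V}
    (c : ι → K) (hf : ∀ i, ∀ v ∈ N i, f v = c i • v) :
    trace K V f = ∑ i ∈ hfin.toFinset, c i * finrank K (N i) := by
  have hmaps : ∀ i, Set.MapsTo f (N i) (N i) := fun i v hv => by
    rw [SetLike.mem_coe, hf i v hv]
    exact (N i).smul_mem _ hv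
  rw [trace_eq_sum_trace_restrict' hN hfin hmaps]
  refine Finset.sum_congr rfl fun i _ => ?_
  have hrestrict : f.restrict (hmaps i) = c i • 1 := by
    ext v
    exact hf i v v.2
  rw [hrestrict, map_smul, trace_one, smul_eq_mul]

namespace Module.End

theorem HasEigenvector.pow_eq_one {K V : Type*} [Field K] [AddCommGroup V] [Module K V]
    {f : End K V} {μ : K} {v : V} (hv : f.HasEigenvector μ v) {n : ℕ} (hf : f ^ n = 1) :
    μ ^ n = 1 := by
  have h := hv.pow_apply n
  rw [hf, one_apply] at h
  exact smul_left_injective K hv.2 (h.symm.trans (one_smul K v).symm)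

variable {V : Type*} [AddCommGroup V] [Module ℂ V] [FiniteDimensional ℂ V]

theorem isInternal_eigenspace_of_pow_eq_one {f : End ℂ V} {n : ℕ} (hn : n ≠ 0)
    (hf : f ^ n = 1) : DirectSum.IsInternal f.eigenspace := by
  have hss : f.IsSemisimple := isSemisimple_of_squarefree_aeval_eq_zero
    (separable_X_pow_sub_C (1 : ℂ) (by exact_mod_cast hn) one_ne_zero).squarefree
    (by simp [hf])
  refine (DirectSum.isInternal_submodule_iff_iSupIndep_and_iSup_eq_top _).mpr
    ⟨f.eigenspaces_iSupIndep, ?_⟩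
  simpa only [hss.isFinitelySemisimple.maxGenEigenspace_eq_eigenspace] using
    f.iSup_maxGenEigenspace_eq_top

theorem trace_inv_eq_conj_trace {u : (End ℂ V)ˣ} {n : ℕ} (hn : n ≠ 0) (hu : u ^ n = 1) :
    trace ℂ V ↑u⁻¹ = conj (trace ℂ V u) := by
  have hf : (u : End ℂ V) ^ n = 1 := by rw [← Units.val_pow_eq_pow_val, hu, Units.val_one]
  have hN := isInternal_eigenspace_of_pow_eq_one hn hf
  have hfin := Submodule.finite_ne_bot_of_iSupIndep (u : End ℂ V).eigenspaces_iSupIndep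
  have hinv : ∀ μ, ∀ v ∈ (u : End ℂ V).eigenspace μ, (↑u⁻¹ : End ℂ V) v = conj μ • v := by
    intro μ v hv
    rcases eq_or_ne v 0 with rfl | hv0
    · simp
    have hμ : μ ^ n = 1 := HasEigenvector.pow_eq_one ⟨hv, hv0⟩ hf
    have hμ0 : μ ≠ 0 := by
      rintro rfl
      simp [hn] at hμ
    rw [← Complex.inv_eq_conj (Complex.norm_eq_one_of_pow_eq_one hμ hn)]
    calc (↑u⁻¹ : End ℂ V) v = (↑u⁻¹ : End ℂ V) (μ⁻¹ • (u : End ℂ V) v) := by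
          rw [mem_eigenspace_iff.mp hv, inv_smul_smul₀ hμ0]
      _ = μ⁻¹ • v := by rw [map_smul, ← mul_apply, Units.inv_mul, one_apply]
  rw [trace_eq_sum_of_isInternal hN hfin id fun μ v hv => mem_eigenspace_iff.mp hv,
    trace_eq_sum_of_isInternal hN hfin _ hinv, map_sum]
  simp

end Module.End

namespace Representation

section

variable {G k V W : Type*} [Group G] [Field k] [AddCommGroup V] [Module k V]
  [AddCommGroup W] [Module k W]

def IsCentralCharacter (ρ : Representation k G V) (ψ : G → k) : Prop :=
  ∀ z ∈ Subgroup.center G, ρ z = ψ z • LinearMap.id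

namespace IsCentralCharacter

variable {ρ : Representation k G V} {σ : Representation k G W} {ψ : G → k}

theorem inv_mul_self [Nontrivial V] (hψ : ρ.IsCentralCharacter ψ) {z : G}
    (hz : z ∈ Subgroup.center G) : ψ z⁻¹ * ψ z = 1 := by
  obtain ⟨v, hv⟩ := exists_ne (0 : V)
  have h : ρ z⁻¹ (ρ z v) = v := by
    rw [← Module.End.mul_apply, ← map_mul, inv_mul_cancel, map_one, Module.End.one_apply]
  rw [hψ z hz, hψ z⁻¹ (inv_mem hz)] at h
  simp only [LinearMap.smul_apply, LinearMap.id_apply, smul_smul] at h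
  exact smul_left_injective k hv (h.trans (one_smul k v).symm)

theorem character_eq [FiniteDimensional k V] (hψ : ρ.IsCentralCharacter ψ) {z : G}
    (hz : z ∈ Subgroup.center G) : ρ.character z = ψ z * finrank k V := by
  rw [character, hψ z hz, map_smul, trace_id, smul_eq_mul]

theorem character_mul_character_inv [FiniteDimensional k V] [FiniteDimensional k W]
    [Nontrivial V] (hρ : ρ.IsCentralCharacter ψ) (hσ : σ.IsCentralCharacter ψ) {z : G}
    (hz : z ∈ Subgroup.center G) :
    ρ.character z * σ.character z⁻¹ = finrank k V * finrank k W := by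
  rw [hρ.character_eq hz, hσ.character_eq (inv_mem hz)]
  linear_combination (finrank k V * finrank k W : k) * hρ.inv_mul_self hz

end IsCentralCharacter

theorem isIrreducible_of_forall_submodule [Nontrivial V] (ρ : Representation k G V)
    (h : ∀ U : Submodule k V, (∀ g : G, ∀ v ∈ U, ρ g v ∈ U) → U = ⊥ ∨ U = ⊤) :
    ρ.IsIrreducible where
  exists_pair_ne := ⟨⊥, ⊤, fun h => bot_ne_top (congrArg Subrepresentation.toSubmodule h)⟩
  eq_bot_or_eq_top U := (h U.toSubmodule U.apply_mem_toSubmodule).imp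
    Subrepresentation.ext Subrepresentation.ext

theorem sum_center_character_mul_character_inv [Fintype G]
    [DecidablePred (· ∈ Subgroup.center G)] [FiniteDimensional k V] [FiniteDimensional k W]
    [Nontrivial V] {ρ : Representation k G V} {σ : Representation k G W} {ψ : G → k}
    (hρ : ρ.IsCentralCharacter ψ) (hσ : σ.IsCentralCharacter ψ) :
    ∑ z ∈ Finset.univ.filter (· ∈ Subgroup.center G), ρ.character z * σ.character z⁻¹ =
      Nat.card (Subgroup.center G) * (finrank k V * finrank k W) := by
  rw [Finset.sum_congr rfl fun z hz =>
      hρ.character_mul_character_inv hσ (Finset.mem_filter.mp hz).2,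
    Finset.sum_const, nsmul_eq_mul, ← Fintype.card_subtype, Nat.card_eq_fintype_card]

end

section Complex

variable {G V : Type*} [Group G] [AddCommGroup V] [Module ℂ V] [FiniteDimensional ℂ V]

theorem character_inv [Finite G] (ρ : Representation ℂ G V) (g : G) :
    ρ.character g⁻¹ = conj (ρ.character g) :=
  Module.End.trace_inv_eq_conj_trace (u := ρ.toHomUnits g) Nat.card_pos.ne'
    (by rw [← map_pow, pow_card_eq_one', map_one])

theorem character_eq_zero_of_notMem_center [Fintype G] [Nontrivial V]
    (ρ : Representation ℂ G V) [ρ.IsIrreducible] {ψ : G → ℂ} (hψ : ρ.IsCentralCharacter ψ)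
    (hSV : Nat.card (G ⧸ Subgroup.center G) = finrank ℂ V ^ 2) {g : G}
    (hg : g ∉ Subgroup.center G) : ρ.character g = 0 := by
  classical
  have : Invertible (Nat.card G : ℂ) :=
    invertibleOfNonzero (Nat.cast_ne_zero.mpr Nat.card_pos.ne')
  have hnormSq : ∀ g, ρ.character g * ρ.character g⁻¹ = (Complex.normSq (ρ.character g) : ℂ) :=
    fun g => by rw [character_inv, Complex.mul_conj]
  have htotal : ∑ g, Complex.normSq (ρ.character g) = Nat.card G := by
    have h := char_orthonormal ρ ρ
    rw [if_pos ⟨Equiv.refl ρ⟩, inv_mul_eq_one₀ (by simp)] at h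
    simp_rw [hnormSq] at h
    exact_mod_cast h.symm
  have hcenter : ∑ z ∈ Finset.univ.filter (· ∈ Subgroup.center G),
      Complex.normSq (ρ.character z) = Nat.card G := by
    have h := sum_center_character_mul_character_inv hψ hψ
    simp_rw [hnormSq, ← Complex.ofReal_sum] at h
    rw [Subgroup.card_eq_card_quotient_mul_card_subgroup (Subgroup.center G), hSV]
    exact_mod_cast h.trans (by push_cast; ring : _ = ((finrank ℂ V ^ 2 * _ : ℕ) : ℂ))
  have hrest : ∑ g ∈ Finset.univ.filter (· ∉ Subgroup.center G),
      Complex.normSq (ρ.character g) = 0 := by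
    linarith [Finset.sum_filter_add_sum_filter_not Finset.univ (· ∈ Subgroup.center G)
      fun g => Complex.normSq (ρ.character g)]
  have h := (Finset.sum_eq_zero_iff_of_nonneg fun _ _ => Complex.normSq_nonneg _).mp hrest g
    (by simpa using hg)
  exact Complex.normSq_eq_zero.mp h

theorem nonempty_equiv_of_isCentralCharacter {W : Type*} [AddCommGroup W] [Module ℂ W]
    [FiniteDimensional ℂ W] [Fintype G] [Nontrivial V] [Nontrivial W]
    (ρ : Representation ℂ G V) (σ : Representation ℂ G W) [ρ.IsIrreducible] [σ.IsIrreducible]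
    {ψ : G → ℂ} (hρ : ρ.IsCentralCharacter ψ) (hσ : σ.IsCentralCharacter ψ)
    (hSV : Nat.card (G ⧸ Subgroup.center G) = finrank ℂ V ^ 2) : Nonempty (σ.Equiv ρ) := by
  classical
  have hsum : ∑ g, ρ.character g * σ.character g⁻¹ =
      Nat.card (Subgroup.center G) * (finrank ℂ V * finrank ℂ W) := by
    rw [← Finset.sum_filter_add_sum_filter_not _ (· ∈ Subgroup.center G),
      sum_center_character_mul_character_inv hρ hσ, add_eq_left]
    refine Finset.sum_eq_zero fun g hg => ?_
    rw [character_eq_zero_of_notMem_center ρ hρ hSV (Finset.mem_filter.mp hg).2, zero_mul]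
  have : Invertible (Nat.card G : ℂ) :=
    invertibleOfNonzero (Nat.cast_ne_zero.mpr Nat.card_pos.ne')
  by_contra h
  have horth := char_orthonormal ρ σ
  rw [if_neg h, hsum] at horth
  simp [finrank_pos.ne'] at horth

end Complex

end Representation

theorem stmt_7_general {G₁ G₂ V₁ V₂ : Type*} [Group G₁] [Group G₂] [Fintype G₂]
    [AddCommGroup V₁] [Module ℂ V₁] [FiniteDimensional ℂ V₁] [Nontrivial V₁]
    [AddCommGroup V₂] [Module ℂ V₂] [FiniteDimensional ℂ V₂] [Nontrivial V₂]
    (ρ₁ : Representation ℂ G₁ V₁) (ρ₂ : Representation ℂ G₂ V₂)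
    (hirr₁ : ∀ U : Submodule ℂ V₁, (∀ g : G₁, ∀ v ∈ U, ρ₁ g v ∈ U) → U = ⊥ ∨ U = ⊤)
    (hirr₂ : ∀ U : Submodule ℂ V₂, (∀ g : G₂, ∀ v ∈ U, ρ₂ g v ∈ U) → U = ⊥ ∨ U = ⊤)
    (hSV₂ : Nat.card (G₂ ⧸ Subgroup.center G₂) = (Module.finrank ℂ V₂) ^ 2)
    (ψ₁ : G₁ → ℂ)
    (hψ₁ : ∀ z ∈ Subgroup.center G₁, ρ₁ z = ψ₁ z • (LinearMap.id : V₁ →ₗ[ℂ] V₁))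
    (ψ₂ : G₂ → ℂ)
    (hψ₂ : ∀ z ∈ Subgroup.center G₂, ρ₂ z = ψ₂ z • (LinearMap.id : V₂ →ₗ[ℂ] V₂))
    (α : G₁ ≃* G₂) :
    (∃ T : V₁ ≃ₗ[ℂ] V₂, ∀ (g : G₁) (v : V₁), T (ρ₁ g v) = ρ₂ (α g) (T v)) ↔
      ∀ z ∈ Subgroup.center G₁, ψ₁ z = ψ₂ (α z) := by
  refine ⟨fun ⟨T, hT⟩ z hz => ?_, fun hψ => ?_⟩
  · obtain ⟨v, hv⟩ := exists_ne (0 : V₁)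
    have h := hT z v
    rw [hψ₁ z hz, hψ₂ _ (MulEquivClass.apply_mem_center α hz)] at h
    simp only [LinearMap.smul_apply, LinearMap.id_apply, map_smul] at h
    exact smul_left_injective ℂ (T.map_ne_zero_iff.mpr hv) h
  let σ : Representation ℂ G₂ V₁ := ρ₁.comp α.symm.toMonoidHom
  have : σ.IsIrreducible := isIrreducible_of_forall_submodule σ fun U hU =>
    hirr₁ U fun g v hv => by simpa [σ] using hU (α g) v hv
  have : ρ₂.IsIrreducible := isIrreducible_of_forall_submodule ρ₂ hirr₂
  have hσ : σ.IsCentralCharacter ψ₂ := fun z hz => by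
    have hz₁ := MulEquivClass.apply_mem_center α.symm hz
    simpa [σ, hψ _ hz₁] using hψ₁ _ hz₁
  obtain ⟨e⟩ := nonempty_equiv_of_isCentralCharacter ρ₂ σ hψ₂ hσ hSV₂
  refine ⟨e.toLinearEquiv, fun g v => ?_⟩
  have h := IntertwiningMap.isIntertwining σ ρ₂ e.toIntertwiningMap (α g) v
  rwa [show σ (α g) = ρ₁ g by simp [σ]] at h

/-- Isomorphism criterion for SV-representations: given SV-representations `ρ₁, ρ₂` of
finite groups `G₁, G₂` with central characters `ψ₁, ψ₂` and an isomorphism `α : G₁ ≃* G₂`,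
an intertwiner `T` with `T ∘ ρ₁(g) = ρ₂(α g) ∘ T` exists iff `ψ₁ = ψ₂ ∘ α` on `Z(G₁)`. -/
theorem stmt_7 {G₁ G₂ V₁ V₂ : Type*} [Group G₁] [Fintype G₁] [Group G₂] [Fintype G₂]
    [AddCommGroup V₁] [Module ℂ V₁] [FiniteDimensional ℂ V₁] [Nontrivial V₁]
    [AddCommGroup V₂] [Module ℂ V₂] [FiniteDimensional ℂ V₂] [Nontrivial V₂]
    (ρ₁ : Representation ℂ G₁ V₁) (ρ₂ : Representation ℂ G₂ V₂)
    (hirr₁ : ∀ U : Submodule ℂ V₁, (∀ g : G₁, ∀ v ∈ U, ρ₁ g v ∈ U) → U = ⊥ ∨ U = ⊤)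
    (hSV₁ : Nat.card (G₁ ⧸ Subgroup.center G₁) = (Module.finrank ℂ V₁) ^ 2)
    (hirr₂ : ∀ U : Submodule ℂ V₂, (∀ g : G₂, ∀ v ∈ U, ρ₂ g v ∈ U) → U = ⊥ ∨ U = ⊤)
    (hSV₂ : Nat.card (G₂ ⧸ Subgroup.center G₂) = (Module.finrank ℂ V₂) ^ 2)
    (ψ₁ : G₁ → ℂ)
    (hψ₁ : ∀ z ∈ Subgroup.center G₁, ρ₁ z = ψ₁ z • (LinearMap.id : V₁ →ₗ[ℂ] V₁))
    (ψ₂ : G₂ → ℂ)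
    (hψ₂ : ∀ z ∈ Subgroup.center G₂, ρ₂ z = ψ₂ z • (LinearMap.id : V₂ →ₗ[ℂ] V₂))
    (α : G₁ ≃* G₂) :
    (∃ T : V₁ ≃ₗ[ℂ] V₂, ∀ (g : G₁) (v : V₁), T (ρ₁ g v) = ρ₂ (α g) (T v)) ↔
      ∀ z ∈ Subgroup.center G₁, ψ₁ z = ψ₂ (α z) :=
  stmt_7_general ρ₁ ρ₂ hirr₁ hirr₂ hSV₂ ψ₁ hψ₁ ψ₂ hψ₂ α
end

section
/- Let (A,B,C,λ) satisfy: C cyclic, λ non-degenerate bilinear, A, B, C finite abelian. If p: C → ℂ× is an injective homomorphism, then the Schrödinger representation σ_p of H(A,B,C,λ) on M(A) is faithful and irreducible, and its character satisfies χ(h(a,b,c)) = p(c)|A| when a = 0 and λ(A,b) ⊆ ker p, and 0 otherwise. -/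
/-- The generalised Heisenberg group `H(A,B,C,λ)` attached to a bilinear pairing
`λ : A × B → C`, as the set `A × B × C` with law
`h(a,b,c)h(a',b',c') = h(a+a', b+b', c+c'+λ(a,b'))`. -/
structure Heis {A B C : Type*} [AddCommGroup A] [AddCommGroup B] [AddCommGroup C]
    (lam : A →+ B →+ C) where
  a : A
  b : B
  c : C

namespace Heis

variable {A B C : Type*} [AddCommGroup A] [AddCommGroup B] [AddCommGroup C]
  {lam : A →+ B →+ C}

theorem ext' {x y : Heis lam} (ha : x.a = y.a) (hb : x.b = y.b) (hc : x.c = y.c) :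
    x = y := by cases x; cases y; simp_all

instance : Mul (Heis lam) :=
  ⟨fun x y => ⟨x.a + y.a, x.b + y.b, x.c + y.c + lam x.a y.b⟩⟩

instance : One (Heis lam) := ⟨⟨0, 0, 0⟩⟩

instance : Inv (Heis lam) := ⟨fun x => ⟨-x.a, -x.b, lam x.a x.b - x.c⟩⟩

@[simp] theorem mul_def (x y : Heis lam) :
    x * y = ⟨x.a + y.a, x.b + y.b, x.c + y.c + lam x.a y.b⟩ := rfl

@[simp] theorem one_def : (1 : Heis lam) = ⟨0, 0, 0⟩ := rfl

@[simp] theorem inv_def (x : Heis lam) : x⁻¹ = ⟨-x.a, -x.b, lam x.a x.b - x.c⟩ := rfl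

instance instGroup : Group (Heis lam) where
  mul := (· * ·)
  one := 1
  inv := (·⁻¹)
  mul_assoc x y z := by apply ext' <;> simp [map_add] <;> abel
  one_mul x := by apply ext' <;> simp
  mul_one x := by apply ext' <;> simp
  inv_mul_cancel x := by apply ext' <;> simp [map_neg]

end Heis


/-- The Schrödinger action of `H(A,B,C,λ)` on `M(A) = (A → ℂ)`. -/
def schrod {A B C : Type*} [AddCommGroup A] [AddCommGroup B] [AddCommGroup C]
    (lam : A →+ B →+ C) (p : C → ℂ) (h : Heis lam) (f : A → ℂ) : A → ℂ :=
  fun x => p (lam x h.b + h.c) * f (x + h.a)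

theorem sum_char_eq_zero {G : Type*} [AddCommGroup G] [Fintype G] (q : G → ℂ)
    (hq : ∀ x y, q (x + y) = q x * q y) (h : ∃ x, q x ≠ 1) : ∑ x : G, q x = 0 := by
  obtain ⟨a, ha⟩ := h
  have key : q a * ∑ x : G, q x = ∑ x : G, q x := by
    rw [Finset.mul_sum]
    exact Fintype.sum_equiv (Equiv.addLeft a) _ _ (fun x => (hq a x).symm)
  have h0 := sub_eq_zero.mpr key
  rw [← sub_one_mul] at h0
  rcases mul_eq_zero.mp h0 with h1 | h2
  · exact absurd (by linear_combination h1) ha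
  · exact h2

/-- Under condition ND-C (`λ` non-degenerate, `C` cyclic) and for an injective
homomorphism `p : C → ℂ×`, the Schrödinger representation `σ_p` of `H(A,B,C,λ)` on
`M(A)` is faithful and irreducible, with character
`χ(h(a,b,c)) = p(c)|A|` if `a = 0` and `λ(A,b) ⊆ ker p`, and `0` otherwise. -/
theorem stmt_17 {A B C : Type*} [AddCommGroup A] [AddCommGroup B] [AddCommGroup C]
    [Fintype A] [Fintype B] [Fintype C] [DecidableEq A] [IsAddCyclic C]
    (lam : A →+ B →+ C)
    (hA : ∀ a : A, (∀ b : B, lam a b = 0) → a = 0)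
    (hB : ∀ b : B, (∀ a : A, lam a b = 0) → b = 0)
    (p : C → ℂ) (hp0 : p 0 = 1) (hpadd : ∀ c c' : C, p (c + c') = p c * p c')
    (hpinj : Function.Injective p) :
    Function.Injective (fun h : Heis lam => schrod lam p h) ∧
      (∀ U : Submodule ℂ (A → ℂ),
        (∀ h : Heis lam, ∀ f ∈ U, schrod lam p h f ∈ U) → U = ⊥ ∨ U = ⊤) ∧
      (∀ h : Heis lam, h.a = 0 → (∀ a : A, p (lam a h.b) = 1) →
        ∑ x : A, schrod lam p h (Pi.single x 1) x = p h.c * (Fintype.card A : ℂ)) ∧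
      (∀ h : Heis lam, ¬(h.a = 0 ∧ ∀ a : A, p (lam a h.b) = 1) →
        ∑ x : A, schrod lam p h (Pi.single x 1) x = 0) := by
  have hpne : ∀ c : C, p c ≠ 0 := by
    intro c hc
    have h1 : p (c + -c) = p c * p (-c) := hpadd c (-c)
    rw [add_neg_cancel, hp0, hc, zero_mul] at h1
    exact one_ne_zero h1
  have hpone : ∀ c : C, p c = 1 → c = 0 := fun c h => hpinj (h.trans hp0.symm)
  refine ⟨?_, ?_, ?_, ?_⟩
  · -- faithfulness
    intro x y hxy
    simp only at hxy
    have H : ∀ f : A → ℂ, ∀ z : A,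
        p (lam z x.b + x.c) * f (z + x.a) = p (lam z y.b + y.c) * f (z + y.a) :=
      fun f z => congrFun (congrFun hxy f) z
    have ha : x.a = y.a := by
      by_contra hne
      have h1 := H (Pi.single x.a 1) 0
      rw [map_zero, AddMonoidHom.zero_apply, zero_add, zero_add, zero_add,
        Pi.single_eq_same, mul_one, Pi.single_apply, if_neg (Ne.symm hne),
        mul_zero] at h1
      exact hpne _ h1
    have hc : x.c = y.c := by
      have h1 := H (fun _ => 1) 0
      simp only [map_zero, AddMonoidHom.zero_apply, zero_add, mul_one] at h1
      exact hpinj h1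
    have hb : x.b = y.b := by
      have key : ∀ z : A, lam z x.b = lam z y.b := by
        intro z
        have h1 := H (fun _ => 1) z
        simp only [mul_one] at h1
        have h2 := hpinj h1
        rw [hc] at h2
        exact add_right_cancel h2
      have h3 : ∀ z : A, lam z (x.b - y.b) = 0 := by
        intro z; rw [map_sub, key z, sub_self]
      exact sub_eq_zero.mp (hB _ fun a => h3 a)
    exact Heis.ext' ha hb hc
  · -- irreducibility
    intro U hU
    by_cases hbot : U = ⊥
    · exact Or.inl hbot
    right
    obtain ⟨f, hf, hf0⟩ := Submodule.ne_bot_iff U |>.mp hbot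
    obtain ⟨x₀, hx0⟩ := Function.ne_iff.mp hf0
    simp only [Pi.zero_apply] at hx0
    set g : A → ℂ := ∑ b : B, p (-(lam x₀ b)) • schrod lam p ⟨0, b, 0⟩ f with hgdef
    have hg : g ∈ U :=
      Submodule.sum_mem _ fun b _ => Submodule.smul_mem _ _ (hU ⟨0, b, 0⟩ f hf)
    have hgval : ∀ x, g x = (∑ b : B, p (lam (x - x₀) b)) * f x := by
      intro x
      simp only [hgdef, Finset.sum_apply, Pi.smul_apply, schrod, smul_eq_mul,
        add_zero]
      rw [Finset.sum_mul]
      refine Finset.sum_congr rfl fun b _ => ?_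
      have e : lam (x - x₀) b = -(lam x₀ b) + lam x b := by
        rw [map_sub, AddMonoidHom.sub_apply]; abel
      rw [e, hpadd]; ring
    have geq : g = ((Fintype.card B : ℂ) * f x₀) • (Pi.single x₀ 1 : A → ℂ) := by
      funext x
      rw [hgval]
      by_cases hx : x = x₀
      · subst hx
        simp only [sub_self, map_zero, AddMonoidHom.zero_apply, hp0,
          Finset.sum_const, Finset.card_univ, nsmul_eq_mul, mul_one,
          Pi.smul_apply, Pi.single_eq_same, smul_eq_mul]
      · have hd : x - x₀ ≠ 0 := sub_ne_zero.mpr hx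
        have hex : ∃ b : B, lam (x - x₀) b ≠ 0 := by
          by_contra hcon; push_neg at hcon; exact hd (hA _ hcon)
        obtain ⟨b, hb'⟩ := hex
        have hsum : ∑ b : B, p (lam (x - x₀) b) = 0 := by
          refine sum_char_eq_zero _ (fun u v => ?_) ⟨b, fun h1 => hb' (hpone _ h1)⟩
          rw [map_add, hpadd]
        rw [hsum, zero_mul, Pi.smul_apply, Pi.single_apply, if_neg hx, smul_zero]
    have hne : ((Fintype.card B : ℂ) * f x₀) ≠ 0 :=
      mul_ne_zero (Nat.cast_ne_zero.mpr Fintype.card_ne_zero) hx0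
    have hsingle₀ : (Pi.single x₀ 1 : A → ℂ) ∈ U := by
      have h2 := U.smul_mem ((Fintype.card B : ℂ) * f x₀)⁻¹ hg
      rwa [geq, smul_smul, inv_mul_cancel₀ hne, one_smul] at h2
    have key : ∀ y : A, (Pi.single y 1 : A → ℂ) ∈ U := by
      intro y
      have h2 := hU ⟨x₀ - y, 0, 0⟩ _ hsingle₀
      have e : schrod lam p ⟨x₀ - y, 0, 0⟩ (Pi.single x₀ 1) = (Pi.single y 1 : A → ℂ) := by
        funext x
        simp only [schrod, map_zero, add_zero, hp0, one_mul]
        rcases eq_or_ne x y with rfl | hxy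
        · rw [Pi.single_eq_same, add_sub_cancel, Pi.single_eq_same]
        · rw [Pi.single_apply, Pi.single_apply, if_neg hxy, if_neg]
          intro hcon
          apply hxy
          have h3 : x + (x₀ - y) - (x₀ - y) = x₀ - (x₀ - y) := by rw [hcon]
          simpa using h3
      rwa [e] at h2
    rw [eq_top_iff]
    intro f' _
    have e : f' = ∑ y : A, f' y • (Pi.single y 1 : A → ℂ) := by
      funext x
      simp [Pi.single_apply, mul_ite]
    rw [e]
    exact Submodule.sum_mem _ fun y _ => Submodule.smul_mem _ _ (key y)
  · -- character on "center"
    intro h ha hker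
    have e : ∀ x : A, schrod lam p h (Pi.single x 1) x = p h.c := by
      intro x
      simp only [schrod, hpadd, hker x, one_mul]
      rw [ha, add_zero, Pi.single_eq_same, mul_one]
    rw [Finset.sum_congr rfl fun x _ => e x]
    simp [Finset.sum_const, mul_comm]
  · -- character vanishes elsewhere
    intro h hnot
    by_cases ha : h.a = 0
    · have hex : ∃ a : A, p (lam a h.b) ≠ 1 := by
        by_contra hc; push_neg at hc; exact hnot ⟨ha, hc⟩
      have e : ∑ x : A, schrod lam p h (Pi.single x 1) x
          = (∑ x : A, p (lam x h.b)) * p h.c := by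
        rw [Finset.sum_mul]
        refine Finset.sum_congr rfl fun x _ => ?_
        simp only [schrod, hpadd]
        rw [ha, add_zero, Pi.single_eq_same, mul_one]
      rw [e, sum_char_eq_zero _
        (fun u v => by rw [map_add, AddMonoidHom.add_apply, hpadd]) hex, zero_mul]
    · refine Finset.sum_eq_zero fun x _ => ?_
      simp only [schrod]
      rw [Pi.single_apply, if_neg, mul_zero]
      intro hcon
      exact ha (add_eq_left.mp hcon)
end

section
/- Let σ_p be a faithful irreducible Schrödinger representation of H = H(A,B,C,λ) on M(A) (λ non-degenerate, C cyclic, p: C → ℂ× injective, |A| = s, r = |C| odd), and D(𝐚) = σ_p(𝒟(𝐚)) for 𝐚 ∈ A ⊕ B where 𝒟(a,b) = h(a,b,(1/2)λ(a,b)). Then Tr(D(𝐚)† D(𝐚')) = s if 𝐚 = 𝐚' and 0 otherwise, and the s² operators {D(𝐚) : 𝐚 ∈ A⊕B} form a ℂ-basis of End_ℂ(M(A)). -/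
/-- The displacement section `𝒟 : A ⊕ B → H(A,B,C,λ)`, `𝒟(a,b) = h(a, b, ½λ(a,b))`. -/
def Dmap {A B C : Type*} [AddCommGroup A] [AddCommGroup B] [AddCommGroup C]
    (lam : A →+ B →+ C) (half : C → C) (x : A × B) : Heis lam :=
  ⟨x.1, x.2, half (lam x.1 x.2)⟩

/-- The Schrödinger representation `σ_p` of `H(A,B,C,λ)` as a linear operator on
`M(A) = (A → ℂ)`: `(σ_p(h(a,b,c))f)(x) = p(λ(x,b)+c) f(x+a)`. -/
def schrodL {A B C : Type*} [AddCommGroup A] [AddCommGroup B] [AddCommGroup C]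
    (lam : A →+ B →+ C) (p : C → ℂ) (h : Heis lam) : (A → ℂ) →ₗ[ℂ] (A → ℂ) where
  toFun f := fun x => p (lam x h.b + h.c) * f (x + h.a)
  map_add' f g := by funext x; simp [mul_add]
  map_smul' z f := by funext x; simp [smul_eq_mul]; ring


/-!
Packaging `p` as an additive character `ψ` of `C`, the map `h ↦ σ_p(h)` is multiplicative and
`σ_p(h)† = σ_p(h⁻¹)` because `|ψ| = 1`. Moreover `𝒟(−𝐚) = 𝒟(𝐚)⁻¹`, so
`Tr(D(𝐚)† D(𝐚')) = Tr σ_p(𝒟(𝐚)⁻¹𝒟(𝐚'))`. The trace of `σ_p(h(a,b,c))` is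
`[a = 0] ψ(c) Σ_x ψ(λ(x,b))`, and the inner character sum vanishes unless `b = 0` since `λ` is
non-degenerate and `ψ` is injective; hence the trace is `|A|` on the diagonal and `0` off it.
These orthogonality relations make the `D(𝐚)` linearly independent, and non-degeneracy in both
variables embeds `A` and `B` in each other's character groups, so `|A| = |B|` and the
`|A|·|B| = |A|²` operators `D(𝐚)` span `End(M(A))`.
-/

open Finset

lemma LinearMap.trace_pi_eq_sum {R ι : Type*} [CommRing R] [Fintype ι] [DecidableEq ι]
    (T : (ι → R) →ₗ[R] (ι → R)) :
    LinearMap.trace R (ι → R) T = ∑ i, T (Pi.single i 1) i := by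
  rw [LinearMap.trace_eq_matrix_trace R (Pi.basisFun R ι)]
  simp [Matrix.trace, Matrix.diag]

lemma linearIndependent_of_pairing_eq_ite {K M ι : Type*} [Field K] [AddCommGroup M]
    [Module K M] [Fintype ι] [DecidableEq ι] {v : ι → M} (φ : ι → M →ₗ[K] K) {c : K}
    (hc : c ≠ 0) (hφ : ∀ i j, φ i (v j) = if i = j then c else 0) :
    LinearIndependent K v := by
  rw [Fintype.linearIndependent_iff]
  intro g hg i
  have := congrArg (φ i) hg
  simp only [map_sum, map_smul, hφ, smul_eq_mul, mul_ite, mul_zero, sum_ite_eq, mem_univ,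
    if_true, map_zero] at this
  exact (mul_eq_zero.mp this).resolve_right hc

section Pairing

variable {A B C : Type*} [AddCommGroup A] [AddCommGroup B] [AddCommGroup C]
  (lam : A →+ B →+ C) {ψ : AddChar C ℂ}

lemma card_le_card_of_pairing_injective [Fintype A] [Fintype B]
    (hA : ∀ a : A, (∀ b : B, lam a b = 0) → a = 0) (hψ : Function.Injective ψ) :
    Fintype.card A ≤ Fintype.card B := by
  have hlam : Function.Injective lam := by
    refine (injective_iff_map_eq_zero lam).mpr fun a ha => hA a fun b => ?_
    rw [ha, AddMonoidHom.zero_apply]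
  calc Fintype.card A ≤ Fintype.card (AddChar B ℂ) :=
        Fintype.card_le_of_injective _ ((AddChar.compAddMonoidHom_injective_right ψ hψ).comp hlam)
    _ ≤ Fintype.card B := AddChar.card_addChar_le B ℂ

lemma sum_apply_pairing_eq_ite [Fintype A] [DecidableEq B]
    (hB : ∀ b : B, (∀ a : A, lam a b = 0) → b = 0) (hψ : Function.Injective ψ) (b : B) :
    ∑ a : A, ψ (lam a b) = if b = 0 then (Fintype.card A : ℂ) else 0 := by
  classical
  have hchar : ψ.compAddMonoidHom (lam.flip b) = 0 ↔ b = 0 := by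
    refine ⟨fun h => hB b fun a => hψ ?_, fun h => ?_⟩
    · simpa [AddChar.map_zero_eq_one] using AddChar.eq_zero_iff.mp h a
    · ext a; simp [h]
  have := AddChar.sum_eq_ite (ψ.compAddMonoidHom (lam.flip b))
  simpa only [AddChar.compAddMonoidHom_apply, AddMonoidHom.flip_apply, hchar] using this

end Pairing

section Schrodinger

variable {A B C : Type*} [AddCommGroup A] [AddCommGroup B] [AddCommGroup C]
  {lam : A →+ B →+ C} (ψ : AddChar C ℂ)

lemma schrodL_apply (h : Heis lam) (f : A → ℂ) (x : A) :
    schrodL lam ψ h f x = ψ (lam x h.b + h.c) * f (x + h.a) := rfl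

lemma schrodL_mul (h h' : Heis lam) :
    schrodL lam ψ (h * h') = schrodL lam ψ h ∘ₗ schrodL lam ψ h' := by
  ext f x
  simp only [schrodL_apply, LinearMap.comp_apply, Heis.mul_def, map_add,
    AddMonoidHom.add_apply, AddChar.map_add_eq_mul, add_assoc]
  ring

lemma sum_star_schrodL_mul [Fintype A] [Finite C] (h : Heis lam) (f g : A → ℂ) :
    ∑ x, star (schrodL lam ψ h f x) * g x = ∑ x, star (f x) * schrodL lam ψ h⁻¹ g x := by
  refine Fintype.sum_equiv (Equiv.addRight h.a) _ _ fun x => ?_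
  have hstar : star (ψ (lam x h.b + h.c)) = ψ (lam (x + h.a) (-h.b) + (lam h.a h.b - h.c)) := by
    rw [Complex.star_def, ← AddChar.map_neg_eq_conj]
    congr 1
    simp only [map_add, map_neg, AddMonoidHom.add_apply]
    abel
  simp only [schrodL_apply, Heis.inv_def, Equiv.coe_addRight, star_mul', hstar,
    add_neg_cancel_right]
  ring

lemma trace_schrodL [Fintype A] [DecidableEq A] (h : Heis lam) :
    LinearMap.trace ℂ (A → ℂ) (schrodL lam ψ h)
      = if h.a = 0 then ψ h.c * ∑ x, ψ (lam x h.b) else 0 := by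
  rw [LinearMap.trace_pi_eq_sum]
  simp only [schrodL_apply, Pi.single_apply, add_eq_left, mul_ite, mul_one, mul_zero,
    AddChar.map_add_eq_mul]
  split_ifs <;> simp [mul_sum, mul_comm]

lemma trace_schrodL_eq_ite [Fintype A] [DecidableEq A] [DecidableEq B]
    (hB : ∀ b : B, (∀ a : A, lam a b = 0) → b = 0) (hψ : Function.Injective ψ)
    (h : Heis lam) :
    LinearMap.trace ℂ (A → ℂ) (schrodL lam ψ h)
      = if h.a = 0 ∧ h.b = 0 then (Fintype.card A : ℂ) * ψ h.c else 0 := by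
  rw [trace_schrodL, sum_apply_pairing_eq_ite lam hB hψ]
  by_cases ha : h.a = 0 <;> by_cases hb : h.b = 0 <;> simp [ha, hb, mul_comm]

end Schrodinger

section Displacement

variable {A B C : Type*} [AddCommGroup A] [AddCommGroup B] [AddCommGroup C]
  {lam : A →+ B →+ C} {half : C → C}

lemma Dmap_neg (hhalf : ∀ c : C, half c + half c = c) (x : A × B) :
    Dmap lam half (-x) = (Dmap lam half x)⁻¹ := by
  refine Heis.ext' rfl rfl ?_
  simp only [Dmap, Heis.inv_def, Prod.fst_neg, Prod.snd_neg, map_neg, AddMonoidHom.neg_apply,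
    neg_neg]
  rw [eq_sub_iff_add_eq, hhalf]

lemma trace_schrodL_Dmap_neg_comp [Fintype A] [DecidableEq A] [DecidableEq B]
    (hB : ∀ b : B, (∀ a : A, lam a b = 0) → b = 0) {ψ : AddChar C ℂ}
    (hψ : Function.Injective ψ) (hhalf : ∀ c : C, half c + half c = c) (x y : A × B) :
    LinearMap.trace ℂ (A → ℂ)
        ((schrodL lam ψ (Dmap lam half (-x))).comp (schrodL lam ψ (Dmap lam half y)))
      = if x = y then (Fintype.card A : ℂ) else 0 := by
  rw [Dmap_neg hhalf, ← schrodL_mul, trace_schrodL_eq_ite ψ hB hψ]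
  by_cases hxy : x = y
  · simp [hxy]
  · refine (if_neg fun h => hxy ?_).trans (if_neg hxy).symm
    simp only [Dmap, Heis.mul_def, Heis.inv_def, neg_add_eq_zero] at h
    exact Prod.ext h.1 h.2

end Displacement

theorem stmt_19_general {A B C : Type*} [AddCommGroup A] [AddCommGroup B] [AddCommGroup C]
    [Fintype A] [Fintype B] [Fintype C] [DecidableEq A] [DecidableEq B]
    (lam : A →+ B →+ C)
    (hA : ∀ a : A, (∀ b : B, lam a b = 0) → a = 0)
    (hB : ∀ b : B, (∀ a : A, lam a b = 0) → b = 0)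
    (p : C → ℂ) (hp0 : p 0 = 1) (hpadd : ∀ c c' : C, p (c + c') = p c * p c')
    (hpinj : Function.Injective p)
    (half : C → C) (hhalf : ∀ c : C, half c + half c = c) :
    (∀ (x : A × B) (f g : A → ℂ),
        ∑ a : A, star (schrodL lam p (Dmap lam half x) f a) * g a
          = ∑ a : A, star (f a) * schrodL lam p (Dmap lam half (-x)) g a) ∧
      (∀ x y : A × B,
        LinearMap.trace ℂ (A → ℂ)
            ((schrodL lam p (Dmap lam half (-x))).comp (schrodL lam p (Dmap lam half y)))
          = if x = y then (Fintype.card A : ℂ) else 0) ∧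
      LinearIndependent ℂ (fun x : A × B => schrodL lam p (Dmap lam half x)) ∧
      Submodule.span ℂ (Set.range fun x : A × B => schrodL lam p (Dmap lam half x)) = ⊤ := by
  let ψ : AddChar C ℂ := ⟨p, hp0, hpadd⟩
  have horth := trace_schrodL_Dmap_neg_comp hB (ψ := ψ) hpinj hhalf
  have hindep : LinearIndependent ℂ (fun x : A × B => schrodL lam ψ (Dmap lam half x)) :=
    linearIndependent_of_pairing_eq_ite
      (fun x => LinearMap.trace ℂ _ ∘ₗ
        LinearMap.mulLeft ℂ (schrodL lam ψ (Dmap lam half (-x))))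
      (Nat.cast_ne_zero.mpr Fintype.card_ne_zero) horth
  have hcard : Fintype.card A = Fintype.card B :=
    (card_le_card_of_pairing_injective lam hA (ψ := ψ) hpinj).antisymm
      (card_le_card_of_pairing_injective lam.flip hB (ψ := ψ) hpinj)
  refine ⟨fun x f g => ?_, horth, hindep, hindep.span_eq_top_of_card_eq_finrank ?_⟩
  · rw [Dmap_neg hhalf]
    exact sum_star_schrodL_mul ψ _ f g
  · rw [Module.finrank_linearMap, Module.finrank_pi, Fintype.card_prod, hcard]

/-- For the faithful irreducible Schrödinger representation `σ_p` of `H(A,B,C,λ)`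
(ND-C, `p` injective, `|C|` odd) and the displacement operators `D(𝐚) = σ_p(𝒟(𝐚))`:
`D(−𝐚)` is the adjoint of `D(𝐚)` w.r.t. `⟨f,g⟩ = Σ_x f(x)*g(x)`,
`Tr(D(𝐚)† D(𝐚')) = |A|` if `𝐚 = 𝐚'` and `0` otherwise, and the `s²` operators
`D(𝐚)`, `𝐚 ∈ A ⊕ B`, form a `ℂ`-basis of `End_ℂ(M(A))`. -/
theorem stmt_19 {A B C : Type*} [AddCommGroup A] [AddCommGroup B] [AddCommGroup C]
    [Fintype A] [Fintype B] [Fintype C] [DecidableEq A] [DecidableEq B] [IsAddCyclic C]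
    (lam : A →+ B →+ C)
    (hA : ∀ a : A, (∀ b : B, lam a b = 0) → a = 0)
    (hB : ∀ b : B, (∀ a : A, lam a b = 0) → b = 0)
    (p : C → ℂ) (hp0 : p 0 = 1) (hpadd : ∀ c c' : C, p (c + c') = p c * p c')
    (hpinj : Function.Injective p)
    (hodd : Odd (Fintype.card C))
    (half : C → C) (hhalf : ∀ c : C, half c + half c = c) :
    (∀ (x : A × B) (f g : A → ℂ),
        ∑ a : A, star (schrodL lam p (Dmap lam half x) f a) * g a
          = ∑ a : A, star (f a) * schrodL lam p (Dmap lam half (-x)) g a) ∧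
      (∀ x y : A × B,
        LinearMap.trace ℂ (A → ℂ)
            ((schrodL lam p (Dmap lam half (-x))).comp (schrodL lam p (Dmap lam half y)))
          = if x = y then (Fintype.card A : ℂ) else 0) ∧
      LinearIndependent ℂ (fun x : A × B => schrodL lam p (Dmap lam half x)) ∧
      Submodule.span ℂ (Set.range fun x : A × B => schrodL lam p (Dmap lam half x)) = ⊤ :=
  stmt_19_general lam hA hB p hp0 hpadd hpinj half hhalf
end
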